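/- Let σ > 0, r, q ∈ ℝ, β ∈ ℝ, T > 0, and define μ(β) = −r + β[r − q − σ²/2·(1−β)]. For X > 0 and 0 ≤ t < T, the function V(X,t) = X^β·e^{μ(β)(T−t)}·N(a₂(X,t)), with a₂(X,t) = (ln(X/K) + (r−q−σ²/2)(T−t) + σ²β(T−t))/(σ√(T−t)) and K > 0, satisfies the Black-Scholes equation ∂V/∂t + ½σ²X²∂²V/∂X² + (r−q)X∂V/∂X − rV = 0 on X > 0, 0 < t < T, and for fixed X ≠ K, lim_{t→T−} V(X,t) = X^β·1{X > K}. -/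

import Mathlib

/-!
Write `τ = T - t` and `V = X^β e^{μτ} N(d)` with `d = (log (X/K) + ντ) / (σ√τ)`,
`ν = r - q - σ²/2 + σ²β`. Applying the Black–Scholes operator, the terms carrying `N(d)` collect
into `X^β e^{μτ} N(d)` times `-μ + σ²β(β-1)/2 + (r-q)β - r`, which vanishes by the choice of `μ`;
the terms carrying the density `n(d)` cancel because `n' = -d n` and `d` solves the transport
equation `-∂_τ d + σ²X²(2β ∂_X d / X + ∂²_X d - d (∂_X d)²)/2 + (r-q) X ∂_X d = 0`.
As `τ → 0⁺`, `d → ±∞` according to the sign of `log (X/K)`, so `N(d) → 1{X > K}`.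
-/

open Real Set Filter Topology

noncomputable def stdNormalCDF (x : ℝ) : ℝ :=
  (Real.sqrt (2 * Real.pi))⁻¹ * ∫ t in Set.Iic x, Real.exp (-t ^ 2 / 2)

open MeasureTheory

noncomputable def stdNormalPDF (x : ℝ) : ℝ := (√(2 * π))⁻¹ * exp (-x ^ 2 / 2)

lemma integrable_exp_neg_sq_div_two : Integrable fun t : ℝ => exp (-t ^ 2 / 2) :=
  (integrable_exp_neg_mul_sq (by norm_num : (0 : ℝ) < 1 / 2)).congr <|
    .of_forall fun t => by ring_nf

lemma integral_exp_neg_sq_div_two : ∫ t : ℝ, exp (-t ^ 2 / 2) = √(2 * π) := by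
  convert integral_gaussian (1 / 2) using 1
  · congr 1 with t
    ring_nf
  · ring_nf

lemma hasDerivAt_stdNormalCDF (x : ℝ) : HasDerivAt stdNormalCDF (stdNormalPDF x) x := by
  have hc : Continuous fun t : ℝ => exp (-t ^ 2 / 2) := by fun_prop
  have hsplit : stdNormalCDF = fun y => (√(2 * π))⁻¹ *
      ((∫ t in Iic 0, exp (-t ^ 2 / 2)) + ∫ t in (0 : ℝ)..y, exp (-t ^ 2 / 2)) := by
    funext y
    rw [stdNormalCDF, ← intervalIntegral.integral_Iic_sub_Iic
      integrable_exp_neg_sq_div_two.integrableOn integrable_exp_neg_sq_div_two.integrableOn]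
    ring
  rw [hsplit]
  exact ((intervalIntegral.integral_hasDerivAt_right (hc.intervalIntegrable _ _)
    (hc.stronglyMeasurableAtFilter _ _) hc.continuousAt).const_add _).const_mul _

lemma hasDerivAt_stdNormalPDF (x : ℝ) : HasDerivAt stdNormalPDF (-x * stdNormalPDF x) x := by
  have h : HasDerivAt (fun y : ℝ => -y ^ 2 / 2) (-x) x :=
    ((hasDerivAt_pow 2 x).neg.div_const 2).congr_deriv (by ring)
  exact (h.exp.const_mul _).congr_deriv (by rw [stdNormalPDF]; ring)

lemma tendsto_stdNormalCDF_atTop : Tendsto stdNormalCDF atTop (𝓝 1) := by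
  have h := ((aecover_Iic tendsto_id).integral_tendsto_of_countably_generated
    integrable_exp_neg_sq_div_two).const_mul (√(2 * π))⁻¹
  rwa [integral_exp_neg_sq_div_two, inv_mul_cancel₀ (by positivity)] at h

lemma tendsto_stdNormalCDF_atBot : Tendsto stdNormalCDF atBot (𝓝 0) := by
  have hupper := (aecover_Ioi tendsto_id).integral_tendsto_of_countably_generated
    integrable_exp_neg_sq_div_two
  have hlower : Tendsto (fun x => ∫ t in Iic x, exp (-t ^ 2 / 2)) atBot (𝓝 0) := by
    have h := tendsto_const_nhds (x := ∫ t, exp (-t ^ 2 / 2)) (f := atBot) |>.sub hupper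
    rw [sub_self] at h
    refine h.congr fun x => ?_
    rw [← intervalIntegral.integral_Iic_add_Ioi (b := x)
      integrable_exp_neg_sq_div_two.integrableOn integrable_exp_neg_sq_div_two.integrableOn]
    exact add_sub_cancel_right _ _
  have h := hlower.const_mul (√(2 * π))⁻¹
  rwa [mul_zero] at h

section PowerBinary

variable {σ ν μ β K X τ : ℝ}

/-- The paper's `a₂(X, t)` is `dTwo σ ν K X (T - t)` with `ν = r - q - σ²/2 + σ²β`. -/
noncomputable def dTwo (σ ν K X τ : ℝ) : ℝ := (log (X / K) + ν * τ) / (σ * √τ)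

noncomputable def powerBinary (σ ν μ β K X τ : ℝ) : ℝ :=
  X ^ β * (exp (μ * τ) * stdNormalCDF (dTwo σ ν K X τ))

lemma hasDerivAt_dTwo_spot (hX : X ≠ 0) (hK : K ≠ 0) :
    HasDerivAt (fun Y => dTwo σ ν K Y τ) (1 / (X * (σ * √τ))) X := by
  have hlog : HasDerivAt (fun Y => log (Y / K)) (1 / X) X :=
    (((hasDerivAt_id' X).div_const K).log (div_ne_zero hX hK)).congr_deriv (by field_simp)
  exact ((hlog.add_const (ν * τ)).div_const (σ * √τ)).congr_deriv (div_div _ _ _)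

lemma hasDerivAt_dTwo_maturity (hσ : σ ≠ 0) (hτ : 0 < τ) :
    HasDerivAt (fun τ => dTwo σ ν K X τ) ((ν * τ - log (X / K)) / (2 * τ * (σ * √τ))) τ := by
  have hs : 0 < √τ := sqrt_pos.mpr hτ
  refine (((hasDerivAt_id' τ).const_mul ν |>.const_add (log (X / K))).div
    ((hasDerivAt_sqrt hτ.ne').const_mul σ) (mul_ne_zero hσ hs.ne')).congr_deriv ?_
  field_simp
  rw [sq_sqrt hτ.le]
  ring

lemma hasDerivAt_rpow_mul_comp_dTwo {G : ℝ → ℝ} {g' : ℝ} (hX : X ≠ 0) (hK : K ≠ 0)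
    (hG : HasDerivAt G g' (dTwo σ ν K X τ)) :
    HasDerivAt (fun Y => Y ^ β * G (dTwo σ ν K Y τ))
      (X ^ (β - 1) * (β * G (dTwo σ ν K X τ) + g' / (σ * √τ))) X := by
  refine ((hasDerivAt_rpow_const (p := β) (Or.inl hX)).mul
    (hG.comp X (hasDerivAt_dTwo_spot hX hK))).congr_deriv ?_
  rw [rpow_sub_one hX, Function.comp_apply]
  field_simp

lemma hasDerivAt_powerBinary_spot (hX : X ≠ 0) (hK : K ≠ 0) :
    HasDerivAt (fun Y => powerBinary σ ν μ β K Y τ)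
      (X ^ (β - 1) * (exp (μ * τ) * (β * stdNormalCDF (dTwo σ ν K X τ) +
        stdNormalPDF (dTwo σ ν K X τ) / (σ * √τ)))) X :=
  (hasDerivAt_rpow_mul_comp_dTwo hX hK
    ((hasDerivAt_stdNormalCDF _).const_mul (exp (μ * τ)))).congr_deriv (by ring)

lemma hasDerivAt_deriv_powerBinary_spot (hX : X ≠ 0) (hK : K ≠ 0) :
    HasDerivAt (deriv fun Y => powerBinary σ ν μ β K Y τ)
      (X ^ (β - 1 - 1) * (exp (μ * τ) * (β - 1) * (β * stdNormalCDF (dTwo σ ν K X τ) +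
        stdNormalPDF (dTwo σ ν K X τ) / (σ * √τ)) + exp (μ * τ) *
          (β * stdNormalPDF (dTwo σ ν K X τ) -
            dTwo σ ν K X τ * stdNormalPDF (dTwo σ ν K X τ) / (σ * √τ)) / (σ * √τ))) X := by
  have hderiv : (deriv fun Y => powerBinary σ ν μ β K Y τ) =ᶠ[𝓝 X] fun Y =>
      Y ^ (β - 1) * (exp (μ * τ) * (β * stdNormalCDF (dTwo σ ν K Y τ) +
        stdNormalPDF (dTwo σ ν K Y τ) / (σ * √τ))) :=
    (eventually_ne_nhds hX).mono fun Y hY => (hasDerivAt_powerBinary_spot hY hK).deriv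
  have hG := (((hasDerivAt_stdNormalCDF (dTwo σ ν K X τ)).const_mul β).add
    ((hasDerivAt_stdNormalPDF (dTwo σ ν K X τ)).div_const (σ * √τ))).const_mul (exp (μ * τ))
  refine (hasDerivAt_rpow_mul_comp_dTwo hX hK hG).congr_of_eventuallyEq hderiv |>.congr_deriv ?_
  simp only [Pi.add_apply]
  ring

lemma hasDerivAt_powerBinary_maturity (hσ : σ ≠ 0) (hτ : 0 < τ) :
    HasDerivAt (fun τ => powerBinary σ ν μ β K X τ)
      (μ * powerBinary σ ν μ β K X τ + X ^ β * exp (μ * τ) * stdNormalPDF (dTwo σ ν K X τ) *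
        ((ν * τ - log (X / K)) / (2 * τ * (σ * √τ)))) τ := by
  refine ((((hasDerivAt_id' τ).const_mul μ).exp.mul ((hasDerivAt_stdNormalCDF _).comp τ
    (hasDerivAt_dTwo_maturity hσ hτ))).const_mul (X ^ β)).congr_deriv ?_
  rw [powerBinary, Function.comp_apply]
  ring

theorem powerBinary_blackScholes {r q : ℝ} (hσ : σ ≠ 0) (hX : X ≠ 0) (hK : K ≠ 0) (hτ : 0 < τ)
    (hμ : μ = -r + β * (r - q - σ ^ 2 / 2 * (1 - β))) (hν : ν = r - q - σ ^ 2 / 2 + σ ^ 2 * β) :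
    -deriv (fun τ => powerBinary σ ν μ β K X τ) τ +
      1 / 2 * σ ^ 2 * X ^ 2 * deriv (deriv fun Y => powerBinary σ ν μ β K Y τ) X +
      (r - q) * X * deriv (fun Y => powerBinary σ ν μ β K Y τ) X -
      r * powerBinary σ ν μ β K X τ = 0 := by
  rw [(hasDerivAt_powerBinary_maturity hσ hτ).deriv,
    (hasDerivAt_deriv_powerBinary_spot hX hK).deriv, (hasDerivAt_powerBinary_spot hX hK).deriv,
    powerBinary]
  simp only [rpow_sub_one hX]
  generalize stdNormalCDF (dTwo σ ν K X τ) = N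
  generalize stdNormalPDF (dTwo σ ν K X τ) = n
  generalize exp (μ * τ) = E
  obtain ⟨s, hs, rfl⟩ : ∃ s, 0 < s ∧ τ = s ^ 2 := ⟨√τ, sqrt_pos.mpr hτ, (sq_sqrt hτ.le).symm⟩
  rw [dTwo, sqrt_sq hs.le]
  subst hμ hν
  field_simp
  ring

lemma tendsto_stdNormalCDF_dTwo (hσ : 0 < σ) (hX : 0 < X) (hK : 0 < K) (hXK : X ≠ K) :
    Tendsto (fun τ => stdNormalCDF (dTwo σ ν K X τ)) (𝓝[>] 0) (𝓝 (if K < X then 1 else 0)) := by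
  have hnum : Tendsto (fun τ => log (X / K) + ν * τ) (𝓝[>] 0) (𝓝 (log (X / K))) := by
    refine (Continuous.tendsto' (by fun_prop) 0 _ ?_).mono_left nhdsWithin_le_nhds
    simp
  have hden : Tendsto (fun τ => σ * √τ) (𝓝[>] 0) (𝓝[>] 0) := by
    refine tendsto_nhdsWithin_of_tendsto_nhds_of_eventually_within _ ?_
      (eventually_nhdsWithin_of_forall fun τ hτ => mul_pos hσ (sqrt_pos.mpr hτ))
    refine (Continuous.tendsto' (by fun_prop) 0 _ ?_).mono_left nhdsWithin_le_nhds
    simp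
  rcases hXK.lt_or_gt with hlt | hgt
  · rw [if_neg hlt.not_gt]
    exact tendsto_stdNormalCDF_atBot.comp (hnum.neg_mul_atTop
      (log_neg (div_pos hX hK) ((div_lt_one hK).mpr hlt)) hden.inv_tendsto_nhdsGT_zero)
  · rw [if_pos hgt]
    exact tendsto_stdNormalCDF_atTop.comp (hnum.pos_mul_atTop
      (log_pos ((one_lt_div hK).mpr hgt)) hden.inv_tendsto_nhdsGT_zero)

lemma tendsto_powerBinary_nhdsGT_zero (hσ : 0 < σ) (hX : 0 < X) (hK : 0 < K) (hXK : X ≠ K) :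
    Tendsto (fun τ => powerBinary σ ν μ β K X τ) (𝓝[>] 0)
      (𝓝 (X ^ β * if K < X then 1 else 0)) := by
  have hexp : Tendsto (fun τ => exp (μ * τ)) (𝓝[>] 0) (𝓝 1) := by
    refine (Continuous.tendsto' (by fun_prop) 0 _ ?_).mono_left nhdsWithin_le_nhds
    simp
  simpa [powerBinary] using
    tendsto_const_nhds.mul (hexp.mul (tendsto_stdNormalCDF_dTwo hσ hX hK hXK))

end PowerBinary

theorem power_binary_solution_general (σ r q β T K : ℝ) (hσ : 0 < σ) (hK : 0 < K)
    (μ : ℝ) (hμ : μ = -r + β * (r - q - σ ^ 2 / 2 * (1 - β)))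
    (V : ℝ → ℝ → ℝ)
    (hV : ∀ X > 0, ∀ t < T,
      V X t = X ^ β * Real.exp (μ * (T - t)) *
        stdNormalCDF ((Real.log (X / K) + (r - q - σ ^ 2 / 2) * (T - t) + σ ^ 2 * β * (T - t)) /
          (σ * Real.sqrt (T - t)))) :
    (∀ X > 0, ∀ t ∈ Set.Ioo (0 : ℝ) T,
      deriv (fun s => V X s) t +
        (1 / 2) * σ ^ 2 * X ^ 2 * deriv (deriv (fun Y => V Y t)) X +
        (r - q) * X * deriv (fun Y => V Y t) X - r * V X t = 0) ∧
    ∀ X > 0, X ≠ K →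
      Filter.Tendsto (fun t => V X t) (nhdsWithin T (Set.Iio T))
        (nhds (X ^ β * if K < X then 1 else 0)) := by
  set ν := r - q - σ ^ 2 / 2 + σ ^ 2 * β with hν
  have hVP : ∀ X > 0, ∀ t < T, V X t = powerBinary σ ν μ β K X (T - t) := by
    intro X hX t ht
    rw [hV X hX t ht, powerBinary, dTwo, mul_assoc]
    congr 3
    ring
  refine ⟨fun X hX t ⟨_, ht⟩ => ?_, fun X hX hXK => ?_⟩
  · have htime : (fun s => V X s) =ᶠ[𝓝 t] fun s => powerBinary σ ν μ β K X (T - s) :=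
      eventually_of_mem (Iio_mem_nhds ht) fun s hs => hVP X hX s hs
    have hspot : (fun Y => V Y t) =ᶠ[𝓝 X] fun Y => powerBinary σ ν μ β K Y (T - t) :=
      eventually_of_mem (Ioi_mem_nhds hX) fun Y hY => hVP Y hY t ht
    rw [htime.deriv_eq, deriv_comp_const_sub, hspot.deriv.deriv_eq, hspot.deriv_eq, hVP X hX t ht]
    exact powerBinary_blackScholes hσ.ne' hX.ne' hK.ne' (sub_pos.mpr ht) hμ hν
  · have hτ : Tendsto (fun t => T - t) (𝓝[<] T) (𝓝[>] 0) := by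
      refine tendsto_nhdsWithin_of_tendsto_nhds_of_eventually_within _ ?_
        (eventually_nhdsWithin_of_forall fun t ht => mem_Ioi.mpr (sub_pos.mpr ht))
      exact (Continuous.tendsto' (by fun_prop) T 0 (sub_self T)).mono_left nhdsWithin_le_nhds
    exact (tendsto_powerBinary_nhdsGT_zero hσ hX hK hXK |>.comp hτ).congr'
      (eventually_nhdsWithin_of_forall fun t ht => (hVP X hX t ht).symm)

theorem power_binary_solution (σ r q β T K : ℝ) (hσ : 0 < σ) (hT : 0 < T) (hK : 0 < K)
    (μ : ℝ) (hμ : μ = -r + β * (r - q - σ ^ 2 / 2 * (1 - β)))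
    (V : ℝ → ℝ → ℝ)
    (hV : ∀ X > 0, ∀ t < T,
      V X t = X ^ β * Real.exp (μ * (T - t)) *
        stdNormalCDF ((Real.log (X / K) + (r - q - σ ^ 2 / 2) * (T - t) + σ ^ 2 * β * (T - t)) /
          (σ * Real.sqrt (T - t)))) :
    (∀ X > 0, ∀ t ∈ Set.Ioo (0 : ℝ) T,
      deriv (fun s => V X s) t +
        (1 / 2) * σ ^ 2 * X ^ 2 * deriv (deriv (fun Y => V Y t)) X +
        (r - q) * X * deriv (fun Y => V Y t) X - r * V X t = 0) ∧
    ∀ X > 0, X ≠ K →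
      Filter.Tendsto (fun t => V X t) (nhdsWithin T (Set.Iio T))
        (nhds (X ^ β * if K < X then 1 else 0)) :=
  power_binary_solution_general σ r q β T K hσ hK μ hμ V hV
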